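/- No possibility measure is default-equivalent to the plausibility measure Pl on {a,b,c} given by Pl(∅) = 0, Pl({a}) = Pl({b}) = Pl({c}) = Pl({b,c}) = Pl({a,c}) = 1/2, Pl({a,b}) = Pl({a,b,c}) = 1: for any possibility measure Poss on {a,b,c}, if Poss({c}) < Poss({a,b}), then Poss({c}) < Poss({a}) or Poss({c}) < Poss({b}); hence no Poss agrees with Pl on strict comparisons of all disjoint pairs. -/

import Mathlib

/-!
A possibility measure is maxitive, so `Poss C < Poss (A ∪ B)` forces `Poss C < Poss A` or
`Poss C < Poss B`. Default equivalence transfers this to any function with the same strict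
comparisons of disjoint sets, as long as `C` is disjoint from `A ∪ B`. `Pl18` violates it with
`C = {c}`, `A = {a}`, `B = {b}`: `Pl18 {c} < Pl18 {a, b}`, while `{a}`, `{b}` and `{c}` all have
plausibility `1/2`.
-/

/-- The plausibility measure on `{a,b,c} = Fin 3` with `Pl ∅ = 0`,
`Pl {a,b} = Pl {a,b,c} = 1`, and all other sets having plausibility `1/2`. -/
noncomputable def Pl18 (A : Set (Fin 3)) : ℝ :=
  open scoped Classical in
  if A = ∅ then 0 else if (0 : Fin 3) ∈ A ∧ (1 : Fin 3) ∈ A then 1 else 1/2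

def DefaultEquivalent {α β γ : Type*} [LT β] [LT γ] (f : Set α → β) (g : Set α → γ) : Prop :=
  ∀ A B : Set α, Disjoint A B → (f A < f B ↔ g A < g B)

section Maxitive

variable {α β γ : Type*} [LinearOrder β] {g : Set α → β}

theorem lt_or_lt_of_lt_union (hmax : ∀ A B, g (A ∪ B) = max (g A) (g B)) {A B C : Set α}
    (h : g C < g (A ∪ B)) : g C < g A ∨ g C < g B := by
  rwa [hmax, lt_max_iff] at h

theorem DefaultEquivalent.lt_or_lt_of_lt_union [LT γ] {f : Set α → γ}
    (hfg : DefaultEquivalent f g) (hmax : ∀ A B, g (A ∪ B) = max (g A) (g B))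
    {A B C : Set α} (hC : Disjoint C (A ∪ B)) (h : f C < f (A ∪ B)) : f C < f A ∨ f C < f B := by
  obtain ⟨hCA, hCB⟩ := Set.disjoint_union_right.mp hC
  exact (_root_.lt_or_lt_of_lt_union hmax ((hfg _ _ hC).mp h)).imp
    (hfg _ _ hCA).mpr (hfg _ _ hCB).mpr

end Maxitive

theorem Pl18_singleton (i : Fin 3) : Pl18 {i} = 1 / 2 := by
  have hne : ¬ (0 ∈ ({i} : Set (Fin 3)) ∧ 1 ∈ ({i} : Set (Fin 3))) := by
    rintro ⟨h0, h1⟩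
    exact absurd ((Set.mem_singleton_iff.mp h0).trans (Set.mem_singleton_iff.mp h1).symm)
      (by decide)
  simp only [Pl18, Set.singleton_ne_empty, if_false, hne]

theorem Pl18_zero_one : Pl18 {0, 1} = 1 := by
  simp [Pl18, (Set.insert_nonempty _ _).ne_empty]

theorem no_possibility_default_equivalent :
    ∀ Poss : Set (Fin 3) → ℝ,
      Poss Set.univ = 1 → Poss (∅ : Set (Fin 3)) = 0 →
      (∀ A B : Set (Fin 3), Poss (A ∪ B) = max (Poss A) (Poss B)) →
      (Poss {2} < Poss {0, 1} → Poss {2} < Poss {0} ∨ Poss {2} < Poss {1}) ∧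
      ¬ (∀ A B : Set (Fin 3), Disjoint A B → (Pl18 A < Pl18 B ↔ Poss A < Poss B)) := by
  intro Poss _ _ hmax
  refine ⟨lt_or_lt_of_lt_union hmax, fun hequiv => ?_⟩
  have hdisj : Disjoint ({2} : Set (Fin 3)) ({0} ∪ {1}) := by
    simp [Set.disjoint_singleton_left]
  have hlt : Pl18 {2} < Pl18 ({0} ∪ {1}) := by
    rw [← Set.insert_eq, Pl18_singleton, Pl18_zero_one]; norm_num
  rcases DefaultEquivalent.lt_or_lt_of_lt_union hequiv hmax hdisj hlt with h | h <;>
    simp [Pl18_singleton] at h
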